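/- In the ring ℚ⟨x,y⟩[[T]], the harmonic-product inverse of (1-yT)^{-1} = Σ_{n≥0}yⁿTⁿ is 1 - yT(1+zT)^{-1}, where z = x+y; that is, (1-yT)^{-1} * (1 - yT(1+zT)^{-1}) = 1. -/

import Mathlib

open scoped BigOperators

abbrev Ltr := Fin 2

/-- `𝔥 = ℚ⟨x,y⟩`, realized as the monoid algebra of the free monoid on two letters. -/
abbrev H := MonoidAlgebra ℚ (FreeMonoid Ltr)

/-- The word `u₁⋯u_m` as an element of `𝔥`. -/
noncomputable def wrd (l : List Ltr) : H := MonoidAlgebra.of ℚ (FreeMonoid Ltr) (FreeMonoid.ofList l)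

/-- The generator `x`. -/
noncomputable def Xh : H := wrd [0]
/-- The generator `y`. -/
noncomputable def Yh : H := wrd [1]

/-- Letter produced when stuffling letters `u, v`: `y` iff both are `y`, else `x`. -/
noncomputable def ellt (a b : Ltr) : H := if a = 1 ∧ b = 1 then Yh else Xh
def cc1 (a b : Ltr) : ℚ := if a = 1 ∧ b = 0 then -1 else 1
def cc2 (a b : Ltr) : ℚ := if a = 0 ∧ b = 1 then -1 else 1
def cc3 (a b : Ltr) : ℚ := if a = 0 ∧ b = 0 then -1 else 1

/-- The harmonic (stuffle) product on words of `𝔥`: on `𝔥¹` it is Hoffman's harmonic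
product defined by `w*1 = 1*w = w` and
`z_k w₁ * z_l w₂ = z_k(w₁ * z_l w₂) + z_l(z_k w₁ * w₂) + z_{k+l}(w₁ * w₂)` with
`z_n = yx^{n-1}`, extended to all of `𝔥` (compatibly, via `w₁e₁ ⊛̃ w₂e₁ = (w₁*w₂)e₁`). -/
noncomputable def starW : List Ltr → List Ltr → H
  | [], v => wrd v
  | u, [] => wrd u
  | a :: u, b :: v =>
      cc1 a b • (ellt a b * starW u (b :: v)) + cc2 a b • (ellt a b * starW (a :: u) v)
      + cc3 a b • (ellt a b * Xh * starW u v)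
termination_by u v => u.length + v.length

/-- The harmonic product `*` on `𝔥`, extended bilinearly. -/
noncomputable def star (f g : H) : H :=
  f.coeff.sum fun u cu => g.coeff.sum fun v cv => (cu * cv) • starW u.toList v.toList

abbrev PS := PowerSeries H

/-- The harmonic product `*` extended coefficientwise to `𝔥[[T]]` (resp. `𝔥[[A]]`). -/
noncomputable def starPS (f g : PS) : PS :=
  PowerSeries.mk fun n =>
    ∑ p ∈ Finset.HasAntidiagonal.antidiagonal n,
      star (PowerSeries.coeff p.1 f) (PowerSeries.coeff p.2 g)

/-- Membership in `𝔥¹ = ℚ ⊕ y𝔥`: every word of the support is empty or starts with `y`. -/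
def inH1 (f : H) : Prop :=
  ∀ l ∈ f.coeff.support, FreeMonoid.toList l = [] ∨ (FreeMonoid.toList l).head? = some 1

/-! The coefficient of `T^(n+1)` in the product is `y^(n+1) - Σ_{p+q=n} (-1)^q y^p * (y z^q)`.
Let `C_n`, `D_n`, `E_n` be the alternating convolutions `Σ_{p+q=n} (-1)^q y^p * g_q` for
`g_q = y z^q`, `z^q`, `x z^q`. Peeling the first letter off `y^(p+1)` with the recursive rule
for `*`, and the first factor off `z^(q+1) = (x + y) z^q`, gives
`D_{n+1} = y^(n+1) - E_n - C_n`, `C_{n+1} = y (C_n + D_{n+1} + x D_n)` and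
`E_{n+1} = x (-E_n + D_{n+1} + x D_n)`, which are solved by `C_n = y^(n+1)`, `D_n = (-x)^n`
and `E_n = x (-x)^n`. -/

open Finset

lemma wrd_mul_single (a : Ltr) (u : FreeMonoid Ltr) (c : ℚ) :
    wrd [a] * MonoidAlgebra.single u c =
      MonoidAlgebra.single (FreeMonoid.ofList (a :: u.toList)) c := by
  rw [wrd, MonoidAlgebra.of_apply, MonoidAlgebra.single_mul_single, one_mul]
  rfl

lemma star_zero_left (g : H) : star 0 g = 0 := Finsupp.sum_zero_index

lemma star_zero_right (f : H) : star f 0 = 0 := by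
  simp [_root_.star]

lemma star_add_left (f₁ f₂ g : H) : star (f₁ + f₂) g = star f₁ g + star f₂ g := by
  unfold _root_.star
  rw [MonoidAlgebra.coeff_add]
  refine Finsupp.sum_add_index' (fun _ => by simp) fun u c₁ c₂ => ?_
  rw [← Finsupp.sum_add]
  exact Finsupp.sum_congr fun v _ => by rw [add_mul, add_smul]

lemma star_add_right (f g₁ g₂ : H) : star f (g₁ + g₂) = star f g₁ + star f g₂ := by
  unfold _root_.star
  rw [← Finsupp.sum_add]
  refine Finsupp.sum_congr fun u _ => ?_
  rw [MonoidAlgebra.coeff_add]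
  refine Finsupp.sum_add_index' (fun _ => by simp) fun v c₁ c₂ => ?_
  rw [mul_add, add_smul]

lemma star_smul_right (c : ℚ) (f g : H) : star f (c • g) = c • star f g := by
  unfold _root_.star
  rw [Finsupp.smul_sum]
  refine Finsupp.sum_congr fun u _ => ?_
  rw [MonoidAlgebra.coeff_smul, Finsupp.sum_smul_index (by simp), Finsupp.smul_sum]
  refine Finsupp.sum_congr fun v _ => ?_
  rw [smul_smul, mul_left_comm]

lemma star_single_single (u v : FreeMonoid Ltr) (c d : ℚ) :
    star (MonoidAlgebra.single u c) (MonoidAlgebra.single v d) =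
      (c * d) • starW u.toList v.toList := by
  unfold _root_.star
  rw [MonoidAlgebra.coeff_single, MonoidAlgebra.coeff_single,
    Finsupp.sum_single_index (by simp), Finsupp.sum_single_index (by simp)]

lemma star_one_left (g : H) : star 1 g = g := by
  conv_rhs => rw [← g.sum_coeff_single]
  unfold _root_.star
  rw [MonoidAlgebra.one_def, MonoidAlgebra.coeff_single, Finsupp.sum_single_index (by simp)]
  refine Finsupp.sum_congr fun v _ => ?_
  rw [one_mul, FreeMonoid.toList_one, starW, wrd, FreeMonoid.ofList_toList]
  simp

lemma star_one_right (f : H) : star f 1 = f := by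
  conv_rhs => rw [← f.sum_coeff_single]
  unfold _root_.star
  refine Finsupp.sum_congr fun u _ => ?_
  rw [MonoidAlgebra.one_def, MonoidAlgebra.coeff_single, Finsupp.sum_single_index (by simp),
    mul_one, FreeMonoid.toList_one]
  have hnil : ∀ l, starW l [] = wrd l := by
    rintro (_ | _) <;> simp [starW]
  rw [hnil, wrd, FreeMonoid.ofList_toList]
  simp

lemma star_wrd_mul_wrd_mul (a b : Ltr) (f g : H) :
    star (wrd [a] * f) (wrd [b] * g) =
      cc1 a b • (ellt a b * star f (wrd [b] * g)) + cc2 a b • (ellt a b * star (wrd [a] * f) g)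
        + cc3 a b • (ellt a b * Xh * star f g) := by
  induction f using MonoidAlgebra.induction_linear with
  | zero => simp [star_zero_left]
  | add f₁ f₂ h₁ h₂ =>
    simp only [mul_add, star_add_left, h₁, h₂, smul_add]
    abel
  | single u c =>
    induction g using MonoidAlgebra.induction_linear with
    | zero => simp [star_zero_right]
    | add g₁ g₂ h₁ h₂ =>
      simp only [mul_add, star_add_right, h₁, h₂, smul_add]
      abel
    | single v d =>
      simp only [wrd_mul_single, star_single_single, FreeMonoid.toList_ofList]
      rw [starW]
      simp only [smul_add, mul_smul_comm, smul_comm (c * d)]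

lemma star_y_mul_y_mul (f g : H) :
    star (Yh * f) (Yh * g) = Yh * (star f (Yh * g) + star (Yh * f) g + Xh * star f g) := by
  have h := star_wrd_mul_wrd_mul 1 1 f g
  simp only [cc1, cc2, cc3, ellt, Fin.isValue, and_true, and_self, and_false, if_true,
    if_false, one_smul, one_ne_zero] at h
  simp only [mul_add, ← mul_assoc]
  exact h

lemma star_y_mul_x_mul (f g : H) :
    star (Yh * f) (Xh * g) = Xh * (-star f (Xh * g) + star (Yh * f) g + Xh * star f g) := by
  have h := star_wrd_mul_wrd_mul 1 0 f g
  simp only [cc1, cc2, cc3, ellt, Fin.isValue, and_true, and_self, and_false, if_true,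
    if_false, one_smul, neg_one_smul, one_ne_zero, zero_ne_one] at h
  simp only [mul_add, mul_neg, ← mul_assoc]
  exact h

noncomputable def altConv (g : ℕ → H) (n : ℕ) : H :=
  ∑ p ∈ antidiagonal n, (-1 : ℚ) ^ p.2 • star (Yh ^ p.1) (g p.2)

lemma altConv_succ (g : ℕ → H) (n : ℕ) :
    altConv g (n + 1) =
      (-1 : ℚ) ^ (n + 1) • g (n + 1) +
        ∑ p ∈ antidiagonal n, (-1 : ℚ) ^ p.2 • star (Yh ^ (p.1 + 1)) (g p.2) := by
  rw [altConv, Nat.sum_antidiagonal_succ, pow_zero, star_one_left]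

lemma altConv_mul_succ (ℓ : H) (s : ℚ)
    (hℓ : ∀ f g,
      star (Yh * f) (ℓ * g) = ℓ * (s • star f (ℓ * g) + star (Yh * f) g + Xh * star f g))
    (g : ℕ → H) (n : ℕ) :
    altConv (fun q => ℓ * g q) (n + 1) =
      ℓ * (s • altConv (fun q => ℓ * g q) n + altConv g (n + 1) + Xh * altConv g n) := by
  rw [altConv_succ, altConv_succ, altConv, altConv]
  simp only [pow_succ' Yh, hℓ, mul_add, smul_add, mul_sum, smul_sum, sum_add_distrib,
    mul_smul_comm, smul_comm s]
  abel

lemma altConv_pow_succ (n : ℕ) :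
    altConv (fun q => (Xh + Yh) ^ q) (n + 1) =
      Yh ^ (n + 1) - altConv (fun q => Xh * (Xh + Yh) ^ q) n -
        altConv (fun q => Yh * (Xh + Yh) ^ q) n := by
  rw [altConv, Nat.sum_antidiagonal_succ', altConv, altConv]
  simp only [pow_zero, one_smul, star_one_right, pow_succ', add_mul, star_add_right, neg_one_mul,
    neg_smul, smul_add, sum_add_distrib, sum_neg_distrib]
  abel

theorem altConv_closed_forms (n : ℕ) :
    altConv (fun q => Yh * (Xh + Yh) ^ q) n = Yh ^ (n + 1) ∧
      altConv (fun q => (Xh + Yh) ^ q) n = (-Xh) ^ n ∧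
      altConv (fun q => Xh * (Xh + Yh) ^ q) n = Xh * (-Xh) ^ n := by
  induction n with
  | zero => simp [altConv, star_one_left]
  | succ n ih =>
    obtain ⟨hY, hZ, hX⟩ := ih
    have hZ' : altConv (fun q => (Xh + Yh) ^ q) (n + 1) = (-Xh) ^ (n + 1) := by
      rw [altConv_pow_succ, hY, hX, pow_succ' (-Xh)]
      noncomm_ring
    refine ⟨?_, hZ', ?_⟩
    · rw [altConv_mul_succ Yh 1 (fun f g => by rw [one_smul]; exact star_y_mul_y_mul f g),
        hY, hZ, hZ', one_smul, pow_succ' (-Xh), pow_succ' Yh (n + 1)]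
      noncomm_ring
    · rw [altConv_mul_succ Xh (-1) (fun f g => by rw [neg_one_smul]; exact star_y_mul_x_mul f g),
        hX, hZ, hZ', neg_one_smul, pow_succ' (-Xh)]
      noncomm_ring

/-- In `ℚ⟨x,y⟩[[T]]`, the harmonic inverse of
`(1-yT)⁻¹ = Σ_n yⁿTⁿ` is `1 - yT(1+zT)⁻¹` with `z = x+y`:
`(1-yT)⁻¹ * (1 - yT(1+zT)⁻¹) = 1`. -/
theorem stmt14 :
    starPS (PowerSeries.mk fun n => (Yh ^ n : H))
      (PowerSeries.mk fun n =>
        if n = 0 then (1 : H) else ((-1 : ℚ) ^ n) • (Yh * (Xh + Yh) ^ (n - 1))) = 1 := by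
  refine PowerSeries.ext fun n => ?_
  cases n with
  | zero => simp [starPS, star_one_left]
  | succ n =>
    have hY := (altConv_closed_forms n).1
    rw [altConv] at hY
    rw [starPS, PowerSeries.coeff_mk, PowerSeries.coeff_one, if_neg n.succ_ne_zero,
      Nat.sum_antidiagonal_succ']
    simp only [PowerSeries.coeff_mk, if_true, if_false, Nat.succ_ne_zero, Nat.add_sub_cancel,
      star_one_right, star_smul_right]
    simp only [pow_succ (-1 : ℚ), mul_neg_one, neg_smul, sum_neg_distrib, hY, add_neg_cancel]
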